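/- arXiv:1705.02985 — 4 statements merged into one kernel-verified Lean document; each statement's English description precedes it below -/
import Mathlib

section
/- Fix β ∈ (0,1), N₀ > 0, Ex > 0, and let T(σ²) = N₀ + β·Ex·σ²/(Ex + σ²). Then for any initial value σ₀² ≥ 0, the sequence defined by σ²_{t+1} = T(σ²_t) converges to the unique positive fixed point of T. -/
/-!
On `[0, ∞)` the map `T x = N₀ + β Ex x / (Ex + x)` satisfies
`T x - T y = β Ex² (x - y) / ((Ex + x)(Ex + y))`, and the denominator is at least `Ex²`,
so `T` is a `β`-contraction of `[0, ∞)` into itself. Since the fixed point `s` is positive,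
`|σ_t - s| ≤ βᵗ |σ₀ - s| → 0`.
-/

open Filter Topology

theorem tendsto_of_dist_succ_le_mul {α : Type*} [PseudoMetricSpace α] {u : ℕ → α} {a : α}
    {q : ℝ} (hq0 : 0 ≤ q) (hq1 : q < 1) (h : ∀ n, dist (u (n + 1)) a ≤ q * dist (u n) a) :
    Tendsto u atTop (𝓝 a) := by
  have hgeom : ∀ n, dist (u n) a ≤ q ^ n * dist (u 0) a := by
    intro n
    induction n with
    | zero => simp
    | succ n ih =>
      calc dist (u (n + 1)) a ≤ q * dist (u n) a := h n
        _ ≤ q * (q ^ n * dist (u 0) a) := by gcongr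
        _ = q ^ (n + 1) * dist (u 0) a := by ring
  have hlim : Tendsto (fun n => q ^ n * dist (u 0) a) atTop (𝓝 0) := by
    simpa using (tendsto_pow_atTop_nhds_zero_of_lt_one hq0 hq1).mul_const (dist (u 0) a)
  exact tendsto_iff_dist_tendsto_zero.2 (squeeze_zero (fun _ => dist_nonneg) hgeom hlim)

noncomputable def stateEvolution (β N₀ Ex x : ℝ) : ℝ := N₀ + β * Ex * x / (Ex + x)

section StateEvolution

variable {β N₀ Ex x y : ℝ}

theorem stateEvolution_nonneg (hβ : 0 ≤ β) (hN : 0 ≤ N₀) (hEx : 0 ≤ Ex) (hx : 0 ≤ x) :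
    0 ≤ stateEvolution β N₀ Ex x := by
  unfold stateEvolution
  positivity

theorem stateEvolution_sub (hx : Ex + x ≠ 0) (hy : Ex + y ≠ 0) :
    stateEvolution β N₀ Ex x - stateEvolution β N₀ Ex y
      = β * Ex ^ 2 * (x - y) / ((Ex + x) * (Ex + y)) := by
  unfold stateEvolution
  field_simp
  ring

theorem dist_stateEvolution_le (hβ : 0 ≤ β) (hEx : 0 < Ex) (hx : 0 ≤ x) (hy : 0 ≤ y) :
    dist (stateEvolution β N₀ Ex x) (stateEvolution β N₀ Ex y) ≤ β * dist x y := by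
  have hden : Ex ^ 2 ≤ (Ex + x) * (Ex + y) := by nlinarith
  have hden_pos : 0 < (Ex + x) * (Ex + y) := by positivity
  rw [Real.dist_eq, Real.dist_eq, stateEvolution_sub (by positivity) (by positivity), abs_div,
    abs_mul, abs_of_nonneg (by positivity : 0 ≤ β * Ex ^ 2), abs_of_pos hden_pos,
    div_le_iff₀ hden_pos]
  calc β * Ex ^ 2 * |x - y| = β * |x - y| * Ex ^ 2 := by ring
    _ ≤ β * |x - y| * ((Ex + x) * (Ex + y)) := by gcongr

end StateEvolution

theorem stmt_3_general (β N₀ Ex : ℝ) (hβ0 : 0 < β) (hβ1 : β < 1) (hN : 0 < N₀) (hEx : 0 < Ex)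
    (s : ℝ) (hs : 0 < s) (hfix : s = N₀ + β * Ex * s / (Ex + s))
    (σ : ℕ → ℝ) (h0 : 0 ≤ σ 0)
    (hrec : ∀ t, σ (t + 1) = N₀ + β * Ex * σ t / (Ex + σ t)) :
    Tendsto σ atTop (nhds s) := by
  have hstep : ∀ t, σ (t + 1) = stateEvolution β N₀ Ex (σ t) := hrec
  have hs_fixed : stateEvolution β N₀ Ex s = s := hfix.symm
  have hσ : ∀ t, 0 ≤ σ t := by
    intro t
    induction t with
    | zero => exact h0
    | succ t ih => rw [hstep]; exact stateEvolution_nonneg hβ0.le hN.le hEx.le ih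
  refine tendsto_of_dist_succ_le_mul hβ0.le hβ1 fun t => ?_
  have hcontract := dist_stateEvolution_le (N₀ := N₀) hβ0.le hEx (hσ t) hs.le
  rwa [hs_fixed, ← hstep] at hcontract

/-- For β ∈ (0,1), N₀ > 0, Ex > 0 and T(σ²) = N₀ + β·Ex·σ²/(Ex + σ²), any sequence
σ²_{t+1} = T(σ²_t) started from σ₀² ≥ 0 converges to the unique positive fixed point. -/
theorem stmt_3 (β N₀ Ex : ℝ) (hβ0 : 0 < β) (hβ1 : β < 1) (hN : 0 < N₀) (hEx : 0 < Ex)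
    (s : ℝ) (hs : 0 < s) (hfix : s = N₀ + β * Ex * s / (Ex + s))
    (huniq : ∀ s' : ℝ, 0 < s' → s' = N₀ + β * Ex * s' / (Ex + s') → s' = s)
    (σ : ℕ → ℝ) (h0 : 0 ≤ σ 0)
    (hrec : ∀ t, σ (t + 1) = N₀ + β * Ex * σ t / (Ex + σ t)) :
    Tendsto σ atTop (nhds s) :=
  stmt_3_general β N₀ Ex hβ0 hβ1 hN hEx s hs hfix σ h0 hrec
end

section
/- Let Ex > 0, R > 0, Δ_SNR ≥ 1, and N₀ = Ex/(2^R − 1). Suppose an L-MMSE equalizer satisfies the Tse–Hanly fixed-point equation σ² = N̂₀ + β·(Ex·σ²)/(Ex + σ²) with σ² = N₀. Then the SNR loss N₀/N̂₀ ≤ Δ_SNR if and only if β ≤ (1 − Δ_SNR⁻¹)·2^R/(2^R − 1). -/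
/-- L-MMSE MOAR: with N₀ = Ex/(2^R − 1) and Tse–Hanly fixed point
N₀ = Nh₀ + β·Ex·N₀/(Ex + N₀) (Nh₀ > 0), the SNR loss N₀/Nh₀ ≤ Δ iff
β ≤ (1 − Δ⁻¹)·2^R/(2^R − 1). -/
theorem stmt_6 (Ex R Δ N₀ Nh₀ β : ℝ) (hEx : 0 < Ex) (hR : 0 < R) (hΔ : 1 ≤ Δ)
    (hN₀ : N₀ = Ex / ((2:ℝ)^R - 1))
    (hN : 0 < Nh₀)
    (hfix : N₀ = Nh₀ + β * (Ex * N₀) / (Ex + N₀)) :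
    N₀ / Nh₀ ≤ Δ ↔ β ≤ (1 - Δ⁻¹) * (2:ℝ)^R / ((2:ℝ)^R - 1) := by
  have ht : 1 < (2:ℝ)^R :=
    (Real.one_lt_rpow_iff_of_pos (by norm_num)).mpr (Or.inl ⟨by norm_num, hR⟩)
  have ht1 : (0:ℝ) < (2:ℝ)^R - 1 := sub_pos.2 ht
  have ht0 : (0:ℝ) < (2:ℝ)^R := lt_trans one_pos ht
  have hDpos : (0:ℝ) < Δ := lt_of_lt_of_le one_pos hΔ
  have hN₀pos : 0 < N₀ := hN₀ ▸ div_pos hEx ht1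
  have hEN : (0:ℝ) < Ex + N₀ := by linarith
  have key : β * (Ex * N₀) / (Ex + N₀) = β * Ex / (2:ℝ)^R := by
    rw [hN₀]; field_simp; ring
  have hNh : Nh₀ = N₀ - β * Ex / (2:ℝ)^R := by rw [hfix, key]; ring
  rw [div_le_iff₀ hN, hNh, hN₀,
    show (1 - Δ⁻¹) * (2:ℝ)^R / ((2:ℝ)^R - 1) = ((Δ - 1) * (2:ℝ)^R) / (Δ * ((2:ℝ)^R - 1)) by
      rw [div_eq_div_iff ht1.ne' (mul_pos hDpos ht1).ne']; field_simp <;> (try ring) <;> tauto,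
    le_div_iff₀ (mul_pos hDpos ht1),
    show Δ * (Ex / ((2:ℝ)^R - 1) - β * Ex / (2:ℝ)^R)
      = (Δ * (Ex * (2:ℝ)^R - β * Ex * ((2:ℝ)^R - 1))) / (((2:ℝ)^R - 1) * (2:ℝ)^R) by
      field_simp <;> (try ring) <;> tauto,
    le_div_iff₀ (mul_pos ht1 ht0), div_mul_eq_mul_div, div_le_iff₀ ht1]
  constructor <;> intro h <;> nlinarith [mul_pos hEx ht1, mul_pos hEx ht0, sq_nonneg ((2:ℝ)^R - 1)]
end

section
/- Fix β > 0, N₀ > 0, Ex > 0, and let σ*² be the unique positive fixed point of σ² = N₀ + β·Ex·σ²/(Ex+σ²). Then σ*² is strictly increasing in β and strictly increasing in N₀, and σ*² ≥ N₀ with equality only if β = 0. -/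
/-!
Clearing the denominator, a fixed point satisfies `s (Ex + s) = N (Ex + s) + β Ex s`, which forces
`β Ex < Ex + s`. Subtracting the cleared equations of two fixed points gives
`(s₁ - s₂) ((Ex + s₁)(Ex + s₂) - β₁ Ex²) = (N₁ - N₂)(Ex + s₁)(Ex + s₂) - (β₂ - β₁) Ex s₂ (Ex + s₁)`,
whose bracket on the left is positive by that bound, so `s₁ - s₂` has the sign of the right-hand
side. The bound `N ≤ s` is the nonnegativity of the interference term `β Ex s / (Ex + s)`.
-/

noncomputable def tseHanly (Ex β N s : ℝ) : ℝ := N + β * Ex * s / (Ex + s)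

namespace tseHanly

variable {Ex β N s : ℝ}

lemma mul_add_eq_of_fixed (hd : Ex + s ≠ 0) (h : s = tseHanly Ex β N s) :
    s * (Ex + s) = N * (Ex + s) + β * Ex * s := by
  unfold tseHanly at h
  field_simp at h
  linarith

lemma mul_lt_add_of_mul_add_eq (hN : 0 < N) (hs : 0 < s) (hd : 0 < Ex + s)
    (h : s * (Ex + s) = N * (Ex + s) + β * Ex * s) : β * Ex < Ex + s := by
  have : 0 < s * (Ex + s - β * Ex) := by nlinarith [mul_pos hN hd]
  nlinarith [(pos_iff_pos_of_mul_pos this).1 hs]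

theorem fixed_lt_fixed {β₁ β₂ N₁ N₂ s₁ s₂ : ℝ} (hEx : 0 < Ex) (hN₁ : 0 < N₁)
    (hs₁ : 0 < s₁) (hs₂ : 0 < s₂) (hβ : β₁ ≤ β₂) (hN : N₁ ≤ N₂) (hlt : β₁ < β₂ ∨ N₁ < N₂)
    (h₁ : s₁ = tseHanly Ex β₁ N₁ s₁) (h₂ : s₂ = tseHanly Ex β₂ N₂ s₂) : s₁ < s₂ := by
  have hd₁ : 0 < Ex + s₁ := by positivity
  have hd₂ : 0 < Ex + s₂ := by positivity
  have e₁ := mul_add_eq_of_fixed hd₁.ne' h₁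
  have e₂ := mul_add_eq_of_fixed hd₂.ne' h₂
  have hbound := mul_lt_add_of_mul_add_eq hN₁ hs₁ hd₁ e₁
  have hbracket : 0 < (Ex + s₁) * (Ex + s₂) - β₁ * Ex * Ex := by
    nlinarith [mul_lt_mul_of_pos_right hbound hEx, mul_pos hd₁ hs₂]
  have hrhs : (N₁ - N₂) * ((Ex + s₁) * (Ex + s₂)) - (β₂ - β₁) * Ex * s₂ * (Ex + s₁) < 0 := by
    have hβterm : 0 ≤ (β₂ - β₁) * Ex * s₂ * (Ex + s₁) := by
      have := sub_nonneg.2 hβ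
      positivity
    have hNterm : (N₁ - N₂) * ((Ex + s₁) * (Ex + s₂)) ≤ 0 :=
      mul_nonpos_of_nonpos_of_nonneg (by linarith) (by positivity)
    rcases hlt with hβ' | hN'
    · nlinarith [mul_pos (mul_pos (mul_pos (sub_pos.2 hβ') hEx) hs₂) hd₁]
    · nlinarith [mul_pos (sub_pos.2 hN') (mul_pos hd₁ hd₂)]
  have hid : (s₁ - s₂) * ((Ex + s₁) * (Ex + s₂) - β₁ * Ex * Ex)
      = (N₁ - N₂) * ((Ex + s₁) * (Ex + s₂)) - (β₂ - β₁) * Ex * s₂ * (Ex + s₁) := by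
    linear_combination (Ex + s₂) * e₁ - (Ex + s₁) * e₂
  exact sub_neg.1 (neg_of_mul_neg_left (hid ▸ hrhs) hbracket.le)

lemma le_fixed (hEx : 0 ≤ Ex) (hβ : 0 ≤ β) (hs : 0 < s) (h : s = tseHanly Ex β N s) :
    N ≤ s := by
  unfold tseHanly at h
  have : 0 ≤ β * Ex * s / (Ex + s) := by positivity
  linarith

lemma eq_zero_of_fixed_eq (hEx : 0 < Ex) (hs : 0 < s) (h : s = tseHanly Ex β N s)
    (hsN : s = N) : β = 0 := by
  unfold tseHanly at h
  have hterm : β * Ex * s / (Ex + s) = 0 := by linarith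
  simpa [hEx.ne', hs.ne', (show 0 < Ex + s by positivity).ne'] using hterm

end tseHanly

/-- The unique positive fixed point σ*² of σ² = N₀ + β·Ex·σ²/(Ex+σ²) is strictly
increasing in β and in N₀, and satisfies σ*² ≥ N₀ with equality only if β = 0. -/
theorem stmt_8 (Ex : ℝ) (hEx : 0 < Ex) :
    (∀ β₁ β₂ N₀ s₁ s₂ : ℝ, 0 < N₀ → 0 ≤ β₁ → β₁ < β₂ → 0 < s₁ → 0 < s₂ →
      s₁ = N₀ + β₁ * Ex * s₁ / (Ex + s₁) → s₂ = N₀ + β₂ * Ex * s₂ / (Ex + s₂) →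
      s₁ < s₂) ∧
    (∀ β N₁ N₂ s₁ s₂ : ℝ, 0 ≤ β → 0 < N₁ → N₁ < N₂ → 0 < s₁ → 0 < s₂ →
      s₁ = N₁ + β * Ex * s₁ / (Ex + s₁) → s₂ = N₂ + β * Ex * s₂ / (Ex + s₂) →
      s₁ < s₂) ∧
    (∀ β N₀ s : ℝ, 0 ≤ β → 0 < N₀ → 0 < s →
      s = N₀ + β * Ex * s / (Ex + s) → N₀ ≤ s ∧ (s = N₀ → β = 0)) := by
  refine ⟨?_, ?_, ?_⟩
  · intro β₁ β₂ N₀ s₁ s₂ hN _ hβ hs₁ hs₂ h₁ h₂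
    exact tseHanly.fixed_lt_fixed hEx hN hs₁ hs₂ hβ.le le_rfl (.inl hβ) h₁ h₂
  · intro β N₁ N₂ s₁ s₂ _ hN₁ hN hs₁ hs₂ h₁ h₂
    exact tseHanly.fixed_lt_fixed hEx hN₁ hs₁ hs₂ le_rfl hN.le (.inr hN) h₁ h₂
  · intro β N₀ s hβ _ hs h
    exact ⟨tseHanly.le_fixed hEx.le hβ hs h, tseHanly.eq_zero_of_fixed_eq hEx hs h⟩
end

section
/- Fix β ∈ (0,1], N₀ > 0, Ex > 0, Êx > 0 and consider the coupled state-evolution recursion θ²_{t+1} = N₀ + β·Êx·θ²_t/(Êx + θ²_t) and σ²_{t+1} = N₀ + β·(θ⁴_t·Ex + Êx²·σ²_t)/(Êx + θ²_t)². Then the θ-recursion converges to a unique positive fixed point θ*², and given θ² = θ*², the σ-recursion converges to the unique value σ*² = (N₀ + β·θ*⁴·Ex/(Êx+θ*²)²)/(1 − β·Êx²/(Êx+θ*²)²), provided β·Êx²/(Êx+θ*²)² < 1. -/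
open Filter

private lemma geom_tendsto (x : ℕ → ℝ) (l C L : ℝ) (hL0 : 0 ≤ L) (hL1 : L < 1)
    (h : ∀ t, |x t - l| ≤ C * L ^ t) : Tendsto x atTop (nhds l) := by
  rw [tendsto_iff_dist_tendsto_zero]
  have hlim : Tendsto (fun t : ℕ => C * L ^ t) atTop (nhds 0) := by
    simpa using (tendsto_pow_atTop_nhds_zero_of_lt_one hL0 hL1).const_mul C
  exact squeeze_zero (fun t => dist_nonneg) (fun t => by simpa [Real.dist_eq] using h t) hlim

/-- Mismatched state evolution: the θ-recursion θ²_{t+1} = N₀ + β·Exh·θ²_t/(Exh+θ²_t)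
converges to a unique positive fixed point θ*²; and, with θ² fixed at θ*², if
β·Exh²/(Exh+θ*²)² < 1 then the σ-recursion
σ²_{t+1} = N₀ + β·(θ*⁴·Ex + Exh²·σ²_t)/(Exh+θ*²)² converges to
σ*² = (N₀ + β·θ*⁴·Ex/(Exh+θ*²)²)/(1 − β·Exh²/(Exh+θ*²)²). -/
theorem stmt_9 (β N₀ Ex Exh : ℝ) (hβ0 : 0 < β) (hβ1 : β ≤ 1)
    (hN : 0 < N₀) (hEx : 0 < Ex) (hExh : 0 < Exh) :
    ∃! θs : ℝ,
      (0 < θs ∧ θs = N₀ + β * Exh * θs / (Exh + θs)) ∧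
      (∀ θ : ℕ → ℝ, 0 ≤ θ 0 →
        (∀ t, θ (t + 1) = N₀ + β * Exh * θ t / (Exh + θ t)) →
        Tendsto θ atTop (nhds θs)) ∧
      (β * Exh^2 / (Exh + θs)^2 < 1 →
        ∀ σ : ℕ → ℝ, 0 ≤ σ 0 →
          (∀ t, σ (t + 1) = N₀ + β * (θs^2 * Ex + Exh^2 * σ t) / (Exh + θs)^2) →
          Tendsto σ atTop
            (nhds ((N₀ + β * θs^2 * Ex / (Exh + θs)^2) / (1 - β * Exh^2 / (Exh + θs)^2)))) := by
  set b : ℝ := Exh - N₀ - β * Exh with hb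
  set s : ℝ := Real.sqrt (b ^ 2 + 4 * N₀ * Exh) with hs
  have hs2 : s ^ 2 = b ^ 2 + 4 * N₀ * Exh := by
    rw [hs, Real.sq_sqrt]; positivity
  have hsb : b < s := by
    have h1 : |b| < s := by
      have h2 : b ^ 2 < s ^ 2 := by rw [hs2]; nlinarith
      have hsnn : 0 ≤ s := Real.sqrt_nonneg _
      nlinarith [abs_nonneg b, sq_abs b]
    exact lt_of_le_of_lt (le_abs_self b) h1
  set θs : ℝ := (s - b) / 2 with hθs
  have hθpos : 0 < θs := by rw [hθs]; linarith
  have hden : 0 < Exh + θs := by linarith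
  have hquad : θs ^ 2 + b * θs - N₀ * Exh = 0 := by
    have hs2' : s ^ 2 = (Exh - N₀ - β * Exh) ^ 2 + 4 * N₀ * Exh := by rw [hs2, hb]
    rw [hθs, hb]; nlinarith [hs2']
  have hfix : θs = N₀ + β * Exh * θs / (Exh + θs) := by
    field_simp
    nlinarith [hquad]
  have hLnn : (0:ℝ) ≤ β * Exh / (Exh + θs) := by positivity
  have hL1 : β * Exh / (Exh + θs) < 1 := by
    rw [div_lt_one hden]
    nlinarith
  refine ⟨θs, ⟨⟨hθpos, hfix⟩, ?_, ?_⟩, ?_⟩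
  · -- convergence of θ recursion
    intro θ h0 hrec
    have hnn : ∀ t, 0 ≤ θ t := by
      intro t
      induction t with
      | zero => exact h0
      | succ n ih =>
        rw [hrec n]
        have : 0 ≤ β * Exh * θ n / (Exh + θ n) := by positivity
        linarith
    apply geom_tendsto θ θs (|θ 0 - θs|) (β * Exh / (Exh + θs)) hLnn hL1
    intro t
    induction t with
    | zero => simp
    | succ n ih =>
      have hdn : 0 < Exh + θ n := by linarith [hnn n]
      have key : θ (n + 1) - θs =
          β * Exh ^ 2 / ((Exh + θ n) * (Exh + θs)) * (θ n - θs) := by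
        conv_lhs => rw [hrec n, hfix]
        field_simp
        ring
      have hbnd : β * Exh ^ 2 / ((Exh + θ n) * (Exh + θs)) ≤ β * Exh / (Exh + θs) := by
        rw [div_le_div_iff₀ (by positivity) hden]
        nlinarith [mul_nonneg (mul_nonneg (mul_nonneg hβ0.le hExh.le) (hnn n)) hden.le]
      calc |θ (n + 1) - θs|
          = β * Exh ^ 2 / ((Exh + θ n) * (Exh + θs)) * |θ n - θs| := by
            rw [key, abs_mul, abs_of_nonneg (by positivity)]
        _ ≤ β * Exh / (Exh + θs) * (|θ 0 - θs| * (β * Exh / (Exh + θs)) ^ n) :=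
            mul_le_mul hbnd ih (abs_nonneg _) hLnn
        _ = |θ 0 - θs| * (β * Exh / (Exh + θs)) ^ (n + 1) := by ring
  · -- convergence of σ recursion
    intro hc σ h0 hrec
    set c : ℝ := β * Exh ^ 2 / (Exh + θs) ^ 2 with hcdef
    set A : ℝ := N₀ + β * θs ^ 2 * Ex / (Exh + θs) ^ 2 with hA
    have hcnn : 0 ≤ c := by rw [hcdef]; positivity
    have h1c : 0 < 1 - c := by linarith
    set σstar : ℝ := A / (1 - c) with hσstar
    have hfixσ : σstar = A + c * σstar := by
      rw [hσstar]; field_simp; ring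
    have hstep : ∀ t, σ (t + 1) - σstar = c * (σ t - σstar) := by
      intro t
      have hr : σ (t + 1) = A + c * σ t := by
        rw [hrec t, hA, hcdef]; field_simp; ring
      rw [hr]
      nth_rewrite 1 [hfixσ]
      ring
    apply geom_tendsto σ σstar (|σ 0 - σstar|) c hcnn hc
    intro t
    induction t with
    | zero => simp
    | succ n ih =>
      calc |σ (n + 1) - σstar| = c * |σ n - σstar| := by
            rw [hstep n, abs_mul, abs_of_nonneg hcnn]
        _ ≤ c * (|σ 0 - σstar| * c ^ n) := by
            exact mul_le_mul_of_nonneg_left ih hcnn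
        _ = |σ 0 - σstar| * c ^ (n + 1) := by ring
  · -- uniqueness
    intro y hy
    have hconv := hy.2.1 (fun _ => θs) (le_of_lt hθpos)
      (fun t => by simpa using hfix)
    exact tendsto_nhds_unique hconv tendsto_const_nhds
end
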